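/- For γ ∈ ℝ and a 2×2 complex matrix ρ with entries ρ₀₀, ρ₀₁, ρ₁₀, ρ₁₁, define F(γ)[ρ] to be the 2×2 matrix [[ρ₀₀ + γ·ρ₁₁, √(1−γ)·ρ₀₁], [√(1−γ)·ρ₁₀, (1−γ)·ρ₁₁]] (with the real square root). Define R[ρ] = [[ρ₁₁, 0], [0, −ρ₁₁]]. Then for every fixed ρ, the map γ ↦ F(γ)[ρ] has derivative at γ = 0 equal to [[ρ₁₁, −(1/2)·ρ₀₁], [−(1/2)·ρ₁₀, −ρ₁₁]], and this derivative equals F(3/4)[ρ] + (1/4)·R[ρ] − ρ. -/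

import Mathlib

open Matrix

attribute [local instance] Matrix.normedAddCommGroup Matrix.normedSpace

/-- The single-qubit amplitude-damping channel with decay parameter `γ`. -/
noncomputable def ampDamp (γ : ℝ) (ρ : Matrix (Fin 2) (Fin 2) ℂ) :
    Matrix (Fin 2) (Fin 2) ℂ :=
  !![ρ 0 0 + (γ : ℂ) * ρ 1 1, (Real.sqrt (1 - γ) : ℂ) * ρ 0 1;
     (Real.sqrt (1 - γ) : ℂ) * ρ 1 0, ((1 - γ : ℝ) : ℂ) * ρ 1 1]

/-- The residual linear map `R`. -/
def residualMap (ρ : Matrix (Fin 2) (Fin 2) ℂ) : Matrix (Fin 2) (Fin 2) ℂ :=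
  !![ρ 1 1, 0; 0, -ρ 1 1]

/-! Splitting `ρ` into its diagonal part `D` and off-diagonal part `O`, the channel is
`F(γ) = D + γ R + √(1 - γ) O`. Hence `F'(0) = R - ½ O`, and since `√(1 - 3/4) = ½`,
`F(3/4) + ¼ R - ρ = D + R + ½ O - (D + O) = R - ½ O` as well. -/

theorem hasDerivAt_sqrt_one_sub {x : ℝ} (hx : x < 1) :
    HasDerivAt (fun γ : ℝ => Real.sqrt (1 - γ)) (-1 / (2 * Real.sqrt (1 - x))) x := by
  have := ((hasDerivAt_id x).const_sub 1).sqrt (sub_ne_zero.mpr hx.ne')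
  simpa [neg_div] using this

theorem ampDamp_eq_add_smul (γ : ℝ) (ρ : Matrix (Fin 2) (Fin 2) ℂ) :
    ampDamp γ ρ = diagonal (diag ρ) + γ • residualMap ρ +
      Real.sqrt (1 - γ) • (ρ - diagonal (diag ρ)) := by
  ext i j
  fin_cases i <;> fin_cases j <;> simp [ampDamp, residualMap, Complex.real_smul]; ring

theorem hasDerivAt_ampDamp (ρ : Matrix (Fin 2) (Fin 2) ℂ) {γ : ℝ} (hγ : γ < 1) :
    HasDerivAt (fun γ : ℝ => ampDamp γ ρ)
      (residualMap ρ + (-1 / (2 * Real.sqrt (1 - γ))) • (ρ - diagonal (diag ρ))) γ := by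
  simp_rw [ampDamp_eq_add_smul]
  have h := (((hasDerivAt_id γ).smul_const (residualMap ρ)).const_add (diagonal (diag ρ))).add
    ((hasDerivAt_sqrt_one_sub hγ).smul_const (ρ - diagonal (diag ρ)))
  rwa [one_smul] at h

theorem hasDerivAt_ampDamp_zero (ρ : Matrix (Fin 2) (Fin 2) ℂ) :
    HasDerivAt (fun γ : ℝ => ampDamp γ ρ)
      !![ρ 1 1, -(1 / 2 : ℂ) * ρ 0 1; -(1 / 2 : ℂ) * ρ 1 0, -ρ 1 1] 0 := by
  convert hasDerivAt_ampDamp ρ zero_lt_one using 1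
  ext i j
  fin_cases i <;> fin_cases j <;> simp [residualMap, Complex.real_smul] <;> ring

theorem sqrt_one_sub_three_quarters : Real.sqrt (1 - 3 / 4) = 1 / 2 := by
  rw [show (1 : ℝ) - 3 / 4 = (1 / 2) ^ 2 by norm_num, Real.sqrt_sq (by norm_num)]

theorem ampDamp_three_quarters_add_residualMap_sub (ρ : Matrix (Fin 2) (Fin 2) ℂ) :
    ampDamp (3 / 4) ρ + (1 / 4 : ℂ) • residualMap ρ - ρ =
      !![ρ 1 1, -(1 / 2 : ℂ) * ρ 0 1; -(1 / 2 : ℂ) * ρ 1 0, -ρ 1 1] := by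
  ext i j
  fin_cases i <;> fin_cases j <;> simp [ampDamp, residualMap, sqrt_one_sub_three_quarters] <;> ring

/-- The derivative of the amplitude-damping channel at `γ = 0` is
`[[ρ₁₁, -(1/2)ρ₀₁], [-(1/2)ρ₁₀, -ρ₁₁]]`, which equals `F(3/4)[ρ] + (1/4) R[ρ] - ρ`. -/
theorem stmt12 (ρ : Matrix (Fin 2) (Fin 2) ℂ) :
    HasDerivAt (fun γ : ℝ => ampDamp γ ρ)
        !![ρ 1 1, -(1 / 2 : ℂ) * ρ 0 1; -(1 / 2 : ℂ) * ρ 1 0, -ρ 1 1] 0 ∧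
      !![ρ 1 1, -(1 / 2 : ℂ) * ρ 0 1; -(1 / 2 : ℂ) * ρ 1 0, -ρ 1 1] =
        ampDamp (3 / 4) ρ + (1 / 4 : ℂ) • residualMap ρ - ρ :=
  ⟨hasDerivAt_ampDamp_zero ρ, (ampDamp_three_quarters_add_residualMap_sub ρ).symm⟩
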